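/- For all a, b ≥ 0 and all c ≠ 0, one has 2·[ log(1 + (a+b)²/c²) + log(1 + (a−b)²/c²) ] ≥ log(1 + 4a²/c²) + log(1 + 4b²/c²) + 2·λ̃(a,b,c). -/
import Mathlib

set_option maxHeartbeats 1000000


/-- `λ̃(a,b,c) := (a+b)²·(a−b)² / ((c² + 2a² + 2b²)·(c² + (a−b)²))`. -/
noncomputable def lamTilde (a b c : ℝ) : ℝ :=
  (a + b) ^ 2 * (a - b) ^ 2 / ((c ^ 2 + 2 * a ^ 2 + 2 * b ^ 2) * (c ^ 2 + (a - b) ^ 2))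

/-- For `a, b ≥ 0` and `c ≠ 0`:
`2[log(1+(a+b)²/c²) + log(1+(a−b)²/c²)] ≥ log(1+4a²/c²) + log(1+4b²/c²) + 2λ̃(a,b,c)`. -/
theorem log_lamTilde_inequality (a b c : ℝ) (ha : 0 ≤ a) (hb : 0 ≤ b) (hc : c ≠ 0) :
    Real.log (1 + 4 * a ^ 2 / c ^ 2) + Real.log (1 + 4 * b ^ 2 / c ^ 2) +
        2 * lamTilde a b c ≤
      2 * (Real.log (1 + (a + b) ^ 2 / c ^ 2) + Real.log (1 + (a - b) ^ 2 / c ^ 2)) := by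
  have hs : (0:ℝ) < c ^ 2 := by positivity
  set A : ℝ := 1 + (a + b) ^ 2 / c ^ 2 with hAdef
  set B : ℝ := 1 + (a - b) ^ 2 / c ^ 2 with hBdef
  set C : ℝ := 1 + 4 * a ^ 2 / c ^ 2 with hCdef
  set D : ℝ := 1 + 4 * b ^ 2 / c ^ 2 with hDdef
  set l : ℝ := lamTilde a b c with hldef
  have hM1 : (0:ℝ) < c ^ 2 + 2 * a ^ 2 + 2 * b ^ 2 := by positivity
  have hM2 : (0:ℝ) < c ^ 2 + (a - b) ^ 2 := by positivity
  have hA : (0:ℝ) < A := by have : 0 ≤ (a+b)^2 / c^2 := by positivity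
                            simp only [hAdef]; linarith
  have hB : (0:ℝ) < B := by have : 0 ≤ (a-b)^2 / c^2 := by positivity
                            simp only [hBdef]; linarith
  have hC : (0:ℝ) < C := by have : 0 ≤ 4*a^2 / c^2 := by positivity
                            simp only [hCdef]; linarith
  have hD : (0:ℝ) < D := by have : 0 ≤ 4*b^2 / c^2 := by positivity
                            simp only [hDdef]; linarith
  have hl0 : 0 ≤ l := by
    simp only [hldef, lamTilde]; positivity
  have hl1 : l ≤ 1 := by
    simp only [hldef, lamTilde]
    rw [div_le_one (by positivity)]
    nlinarith [sq_nonneg (a-b), sq_nonneg c, sq_nonneg ((a-b)^2), sq_nonneg (a+b),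
      mul_nonneg (sq_nonneg c) (sq_nonneg (a-b)), sq_nonneg (c^2)]
  -- key polynomial inequality
  have key : (c^2 + 4*a^2) * (c^2 + 4*b^2) * (c^2)^2 *
        ((c ^ 2 + 2 * a ^ 2 + 2 * b ^ 2) * (c ^ 2 + (a - b) ^ 2)) ^ 2 ≤
      ((c^2 + (a+b)^2) * (c^2 + (a-b)^2)) ^ 2 *
        ((c ^ 2 + 2 * a ^ 2 + 2 * b ^ 2) * (c ^ 2 + (a - b) ^ 2)
          - (a + b) ^ 2 * (a - b) ^ 2) ^ 2 := by
    have hE : ((c^2 + (a+b)^2) * (c^2 + (a-b)^2)) ^ 2 *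
        ((c ^ 2 + 2 * a ^ 2 + 2 * b ^ 2) * (c ^ 2 + (a - b) ^ 2)
          - (a + b) ^ 2 * (a - b) ^ 2) ^ 2
        - (c^2 + 4*a^2) * (c^2 + 4*b^2) * (c^2)^2 *
        ((c ^ 2 + 2 * a ^ 2 + 2 * b ^ 2) * (c ^ 2 + (a - b) ^ 2)) ^ 2 =
        (a+b)^4*(a-b)^12 + 2*c^2*(a+b)^2*(a-b)^12 + 6*c^2*(a+b)^4*(a-b)^10
        + 2*c^2*(a+b)^6*(a-b)^8 + 12*c^4*(a+b)^2*(a-b)^10 + 21*c^4*(a+b)^4*(a-b)^8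
        + 8*c^4*(a+b)^6*(a-b)^6 + 28*c^6*(a+b)^2*(a-b)^8 + 36*c^6*(a+b)^4*(a-b)^6
        + 10*c^6*(a+b)^6*(a-b)^4 + 32*c^8*(a+b)^2*(a-b)^6 + 28*c^8*(a+b)^4*(a-b)^4
        + 4*c^8*(a+b)^6*(a-b)^2 + 18*c^10*(a+b)^2*(a-b)^4 + 8*c^10*(a+b)^4*(a-b)^2
        + 4*c^12*(a+b)^2*(a-b)^2 := by ring
    linarith [hE,
      (by positivity : (0:ℝ) ≤ (a+b)^4*(a-b)^12 + 2*c^2*(a+b)^2*(a-b)^12 + 6*c^2*(a+b)^4*(a-b)^10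
        + 2*c^2*(a+b)^6*(a-b)^8 + 12*c^4*(a+b)^2*(a-b)^10 + 21*c^4*(a+b)^4*(a-b)^8
        + 8*c^4*(a+b)^6*(a-b)^6 + 28*c^6*(a+b)^2*(a-b)^8 + 36*c^6*(a+b)^4*(a-b)^6
        + 10*c^6*(a+b)^6*(a-b)^4 + 32*c^8*(a+b)^2*(a-b)^6 + 28*c^8*(a+b)^4*(a-b)^4
        + 4*c^8*(a+b)^6*(a-b)^2 + 18*c^10*(a+b)^2*(a-b)^4 + 8*c^10*(a+b)^4*(a-b)^2
        + 4*c^12*(a+b)^2*(a-b)^2)]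
  -- hence C*D ≤ (A*B*(1-l))^2
  have hCD : C * D ≤ (A * B * (1 - l)) ^ 2 := by
    have hAB1 : A * B * (1 - l) =
        ((c^2 + (a+b)^2) * (c^2 + (a-b)^2) *
          ((c ^ 2 + 2 * a ^ 2 + 2 * b ^ 2) * (c ^ 2 + (a - b) ^ 2)
            - (a + b) ^ 2 * (a - b) ^ 2)) /
        ((c^2)^2 * ((c ^ 2 + 2 * a ^ 2 + 2 * b ^ 2) * (c ^ 2 + (a - b) ^ 2))) := by
      simp only [hAdef, hBdef, hldef, lamTilde]
      rw [eq_div_iff (by positivity)]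
      field_simp
    have hCD1 : C * D = ((c^2 + 4*a^2) * (c^2 + 4*b^2)) / (c^2)^2 := by
      simp only [hCdef, hDdef]
      field_simp
    rw [hAB1, hCD1, div_pow, div_le_div_iff₀ (by positivity) (by positivity)]
    calc (c^2 + 4*a^2) * (c^2 + 4*b^2) * ((c^2)^2 *
            ((c ^ 2 + 2 * a ^ 2 + 2 * b ^ 2) * (c ^ 2 + (a - b) ^ 2))) ^ 2
        = ((c^2 + 4*a^2) * (c^2 + 4*b^2) * (c^2)^2 *
            ((c ^ 2 + 2 * a ^ 2 + 2 * b ^ 2) * (c ^ 2 + (a - b) ^ 2)) ^ 2) * (c^2)^2 := by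
          ring
      _ ≤ (((c^2 + (a+b)^2) * (c^2 + (a-b)^2)) ^ 2 *
            ((c ^ 2 + 2 * a ^ 2 + 2 * b ^ 2) * (c ^ 2 + (a - b) ^ 2)
              - (a + b) ^ 2 * (a - b) ^ 2) ^ 2) * (c^2)^2 := by
          exact mul_le_mul_of_nonneg_right key (by positivity)
      _ = ((c^2 + (a+b)^2) * (c^2 + (a-b)^2) *
            ((c ^ 2 + 2 * a ^ 2 + 2 * b ^ 2) * (c ^ 2 + (a - b) ^ 2)
              - (a + b) ^ 2 * (a - b) ^ 2)) ^ 2 * (c^2)^2 := by ring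
  -- sqrt step
  have hS : Real.sqrt (C * D) ≤ A * B * (1 - l) := by
    have h1 : Real.sqrt (C * D) ≤ Real.sqrt ((A * B * (1 - l)) ^ 2) :=
      Real.sqrt_le_sqrt hCD
    rwa [Real.sqrt_sq (by nlinarith [mul_pos hA hB] : (0:ℝ) ≤ A * B * (1 - l))] at h1
  have hSpos : 0 < Real.sqrt (C * D) := Real.sqrt_pos.mpr (by positivity)
  -- log lower bound
  have hlog : ∀ t : ℝ, 0 < t → 1 - 1 / t ≤ Real.log t := by
    intro t ht
    have h := Real.log_le_sub_one_of_pos (show (0:ℝ) < t⁻¹ by positivity)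
    rw [Real.log_inv] at h
    have : 1 / t = t⁻¹ := one_div t
    linarith [h]
  -- main chain
  have hT : (0:ℝ) < A * B / Real.sqrt (C * D) := by positivity
  have h2 := hlog _ hT
  have hinv : 1 / (A * B / Real.sqrt (C * D)) = Real.sqrt (C * D) / (A * B) := by
    field_simp
  rw [hinv] at h2
  have h3 : Real.sqrt (C * D) / (A * B) ≤ 1 - l := by
    rw [div_le_iff₀ (by positivity : (0:ℝ) < A * B)]
    calc Real.sqrt (C * D) ≤ A * B * (1 - l) := hS
      _ = (1 - l) * (A * B) := by ring
  have h4 : l ≤ Real.log (A * B / Real.sqrt (C * D)) := by linarith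
  have h5 : Real.log (A * B / Real.sqrt (C * D)) =
      Real.log A + Real.log B - (Real.log C + Real.log D) / 2 := by
    rw [Real.log_div (by positivity) (ne_of_gt hSpos), Real.log_mul hA.ne' hB.ne',
      Real.log_sqrt (by positivity), Real.log_mul hC.ne' hD.ne']
  rw [h5] at h4
  linarith
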